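/- Let (Ω, F, P) be a probability space, G ⊆ F a sub-σ-algebra, and X : Ω → ℝ^d a square-integrable random vector with MMSE reconstruction X̃ := E[X | G]. Then for every G-measurable square-integrable random vector X̂ : Ω → ℝ^d whose law equals the law of X (the zero framewise-marginal perception condition P∘X̂⁻¹ = P∘X⁻¹), one has E‖X − X̂‖² ≥ E‖X − X̃‖² + W₂²(law of X̃, law of X). -/

import Mathlib

/-! The distortion of `X̂` splits orthogonally as `E‖X − X̃‖² + E‖X̃ − X̂‖²`, because `X − X̃` is
orthogonal in `L²` to every `G`-measurable function, in particular to `X̃ − X̂`. The joint law of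
`(X̃, X̂)` is a coupling of the law of `X̃` with that of `X̂`, which is the law of `X`, so the second
term is at least `W₂²(law X̃, law X)`. -/

open MeasureTheory ProbabilityTheory

/-- Squared Wasserstein-2 distance between two measures, as the infimum of the
expected squared distance over all couplings. -/
noncomputable def W2sq {E : Type*} [NormedAddCommGroup E] [MeasurableSpace E]
    (μ ν : Measure E) : ℝ :=
  sInf { c : ℝ | ∃ π : Measure (E × E), IsProbabilityMeasure π ∧
    π.map Prod.fst = μ ∧ π.map Prod.snd = ν ∧ c = ∫ p, ‖p.1 - p.2‖ ^ 2 ∂π }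

lemma W2sq_map_le_integral {Ω E : Type*} [MeasurableSpace Ω] [NormedAddCommGroup E]
    [MeasurableSpace E] [OpensMeasurableSpace E] [MeasurableSub₂ E]
    {P : Measure Ω} [IsProbabilityMeasure P] {Y Z : Ω → E}
    (hY : AEMeasurable Y P) (hZ : AEMeasurable Z P) :
    W2sq (P.map Y) (P.map Z) ≤ ∫ ω, ‖Y ω - Z ω‖ ^ 2 ∂P := by
  have hYZ : AEMeasurable (fun ω => (Y ω, Z ω)) P := hY.prodMk hZ
  have hcost : Measurable fun p : E × E => ‖p.1 - p.2‖ ^ 2 :=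
    ((measurable_fst.sub measurable_snd).norm).pow_const 2
  refine csInf_le ⟨0, ?_⟩ ⟨P.map fun ω => (Y ω, Z ω), Measure.isProbabilityMeasure_map hYZ,
    Measure.fst_map_prodMk₀ hZ, Measure.snd_map_prodMk₀ hY,
    (integral_map hYZ hcost.aestronglyMeasurable).symm⟩
  rintro c ⟨π, -, -, -, rfl⟩
  exact integral_nonneg fun p => by positivity

section L2

variable {Ω E : Type*} [NormedAddCommGroup E] [InnerProductSpace ℝ E] {m m₀ : MeasurableSpace Ω}
  {μ : Measure Ω}

lemma MeasureTheory.Lp.norm_sq_eq_integral_norm_sq (F : Lp E 2 μ) : ‖F‖ ^ 2 = ∫ ω, ‖F ω‖ ^ 2 ∂μ := by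
  rw [← real_inner_self_eq_norm_sq, L2.inner_def]
  exact integral_congr_ae (Filter.Eventually.of_forall fun ω => real_inner_self_eq_norm_sq _)

lemma integral_norm_sub_sq_eq_norm_sub_sq {f g : Ω → E} {F G : Lp E 2 μ}
    (hF : f =ᵐ[μ] F) (hG : g =ᵐ[μ] G) : ∫ ω, ‖f ω - g ω‖ ^ 2 ∂μ = ‖F - G‖ ^ 2 := by
  rw [Lp.norm_sq_eq_integral_norm_sq]
  refine integral_congr_ae ?_
  filter_upwards [hF, hG, Lp.coeFn_sub F G] with ω hFω hGω hsub
  rw [hsub, Pi.sub_apply, hFω, hGω]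

variable [CompleteSpace E]

lemma norm_sub_sq_eq_norm_sub_condExpL2_sq_add (hm : m ≤ m₀) (F G : Lp E 2 μ)
    (hG : AEStronglyMeasurable[m] G μ) :
    ‖F - G‖ ^ 2 = ‖F - condExpL2 E ℝ hm F‖ ^ 2 + ‖(condExpL2 E ℝ hm F : Lp E 2 μ) - G‖ ^ 2 := by
  set Fc : Lp E 2 μ := (condExpL2 E ℝ hm F : Lp E 2 μ)
  have hmeas : AEStronglyMeasurable[m] (⇑(Fc - G)) μ :=
    ((aestronglyMeasurable_condExpL2 hm F).sub hG).congr (Lp.coeFn_sub Fc G).symm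
  have horth : inner ℝ (F - Fc) (Fc - G) = 0 := by
    rw [inner_sub_left, inner_condExpL2_eq_inner_fun hm F (Fc - G) hmeas, sub_self]
  rw [show F - G = (F - Fc) + (Fc - G) by abel, norm_add_sq_real, horth]
  ring

lemma integral_norm_sub_sq_eq_condExp_add [IsFiniteMeasure μ] (hm : m ≤ m₀) {f g : Ω → E}
    (hf : MemLp f 2 μ) (hg : MemLp g 2 μ) (hgm : AEStronglyMeasurable[m] g μ) :
    ∫ ω, ‖f ω - g ω‖ ^ 2 ∂μ =
      ∫ ω, ‖f ω - μ[f|m] ω‖ ^ 2 ∂μ + ∫ ω, ‖μ[f|m] ω - g ω‖ ^ 2 ∂μ := by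
  have hcond : μ[f|m] =ᵐ[μ] condExpL2 E ℝ hm hf.toLp :=
    (hf.condExpL2_ae_eq_condExp (𝕜 := ℝ) hm).symm
  rw [integral_norm_sub_sq_eq_norm_sub_sq hf.coeFn_toLp.symm hg.coeFn_toLp.symm,
    integral_norm_sub_sq_eq_norm_sub_sq hf.coeFn_toLp.symm hcond,
    integral_norm_sub_sq_eq_norm_sub_sq hcond hg.coeFn_toLp.symm]
  exact norm_sub_sq_eq_norm_sub_condExpL2_sq_add hm _ _ (hgm.congr hg.coeFn_toLp.symm)

end L2

theorem statement0 {Ω : Type*} {G F : MeasurableSpace Ω} (hG : G ≤ F)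
    (P : Measure Ω) [IsProbabilityMeasure P] {d : ℕ}
    (X : Ω → EuclideanSpace ℝ (Fin d)) (hX : MemLp X 2 P)
    (Xhat : Ω → EuclideanSpace ℝ (Fin d))
    (hXhat_meas : Measurable[G] Xhat) (hXhat : MemLp Xhat 2 P)
    (hlaw : P.map Xhat = P.map X) :
    ∫ ω, ‖X ω - Xhat ω‖ ^ 2 ∂P ≥
      (∫ ω, ‖X ω - (P[X|G]) ω‖ ^ 2 ∂P) + W2sq (P.map (P[X|G])) (P.map X) := by
  have hW2 : W2sq (P.map (P[X|G])) (P.map X) ≤ ∫ ω, ‖(P[X|G]) ω - Xhat ω‖ ^ 2 ∂P :=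
    hlaw ▸ W2sq_map_le_integral integrable_condExp.aestronglyMeasurable.aemeasurable
      hXhat.aestronglyMeasurable.aemeasurable
  rw [integral_norm_sub_sq_eq_condExp_add hG hX hXhat
    hXhat_meas.stronglyMeasurable.aestronglyMeasurable]
  linarith
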